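/- arXiv:2003.09854 — 5 statements merged into one kernel-verified Lean document; each statement's English description precedes it below -/
import Mathlib

section
/- Let R = Z[q^{±1}, A^{±1}] and for n ≥ 1 let I_n be the ideal of R generated by the elements {α+l; n} = ∏_{i=0}^{n−1}(A·q^{l−i} − A^{−1}·q^{−l+i}) for all l ∈ Z. Then ⋂_{n≥1} I_n = {0}; hence the canonical map R → lim_← R/I_n is injective. -/
/-!
Specializing `A ↦ q^k` sends the factor `A q^{l-i} - A⁻¹ q^{-l+i}` of `{α+l; n}` to
`q^m - q^{-m} = q^{-m} (q^{2m} - 1)` with `m = l - i + k`, a multiple of `q² - 1`. Hence an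
element of every `I_n` specializes into `⋂ₙ (q² - 1)ⁿ`, which is `0` by Krull's intersection
theorem in the Noetherian domain `ℤ[q^{±1}]`. Finally, an element of `ℤ[q^{±1}, A^{±1}]`
killed by every specialization is `0`: for `k` large, `(m, j) ↦ m + k j` is injective on its
support.
-/

/-- The ring `R = ℤ[q^{±1}, A^{±1}]`, realized as the group algebra of `ℤ × ℤ` over `ℤ`,
where `q` corresponds to the first coordinate and `A` to the second. -/
abbrev TwoVarLaurent : Type := AddMonoidAlgebra ℤ (ℤ × ℤ)

/-- `q^m` in `ℤ[q^{±1}, A^{±1}]`. -/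
noncomputable def qpow (m : ℤ) : TwoVarLaurent := AddMonoidAlgebra.single (m, 0) 1

/-- `A^m` in `ℤ[q^{±1}, A^{±1}]`. -/
noncomputable def Apow (m : ℤ) : TwoVarLaurent := AddMonoidAlgebra.single (0, m) 1

/-- `{α+l; n} = ∏_{i=0}^{n−1} (A q^{l−i} − A^{−1} q^{−l+i})`. -/
noncomputable def braidProd (l : ℤ) (n : ℕ) : TwoVarLaurent :=
  ∏ i ∈ Finset.range n, (Apow 1 * qpow (l - i) - Apow (-1) * qpow (-l + i))

/-- The ideal `I_n` generated by the `{α+l; n}`, `l ∈ ℤ`. -/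
noncomputable def In (n : ℕ) : Ideal TwoVarLaurent :=
  Ideal.span { x | ∃ l : ℤ, x = braidProd l n }

open LaurentPolynomial

instance {R : Type*} [CommRing R] [IsNoetherianRing R] : IsNoetherianRing R[T;T⁻¹] :=
  IsLocalization.isNoetherianRing (Submonoid.powers (Polynomial.X : Polynomial R)) _ inferInstance

theorem injOn_fst_add_mul_snd {s : Set (ℤ × ℤ)} {M k : ℤ} (hs : ∀ p ∈ s, |p.1| ≤ M)
    (hk : 2 * M < k) : Set.InjOn (fun p : ℤ × ℤ => p.1 + k * p.2) s := by
  rintro ⟨m, j⟩ hp ⟨m', j'⟩ hp' (h : m + k * j = m' + k * j')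
  have hm : |m| ≤ M := hs _ hp
  have hm' : |m'| ≤ M := hs _ hp'
  have hk₀ : k ≠ 0 := by linarith [abs_nonneg m]
  have hmm' : m' - m = 0 :=
    Int.eq_zero_of_abs_lt_dvd (m := k) ⟨j - j', by linarith⟩
      ((abs_sub _ _).trans_lt (by linarith))
  have hjj' : j = j' := mul_left_cancel₀ hk₀ (by linarith)
  rw [Prod.mk.injEq]
  exact ⟨by linarith, hjj'⟩

theorem Finset.exists_injOn_fst_add_mul_snd (s : Finset (ℤ × ℤ)) :
    ∃ k : ℤ, Set.InjOn (fun p : ℤ × ℤ => p.1 + k * p.2) s := by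
  obtain ⟨M, hM⟩ := (s.finite_toSet.image fun p => |p.1|).bddAbove
  exact ⟨2 * M + 1, injOn_fst_add_mul_snd (fun p hp => hM ⟨p, hp, rfl⟩) (by omega)⟩

/-- The specialization `A ↦ q^k` of `R[q^{±1}, A^{±1}]` onto `R[q^{±1}]`. -/
noncomputable def specializeA (R : Type*) [CommSemiring R] (k : ℤ) :
    AddMonoidAlgebra R (ℤ × ℤ) →+* R[T;T⁻¹] :=
  AddMonoidAlgebra.mapDomainRingHom R ((AddMonoidHom.id ℤ).coprod (AddMonoidHom.mulLeft k))

theorem specializeA_single {R : Type*} [CommSemiring R] (k : ℤ) (p : ℤ × ℤ) (r : R) :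
    specializeA R k (AddMonoidAlgebra.single p r) = AddMonoidAlgebra.single (p.1 + k * p.2) r := by
  simp [specializeA]

theorem eq_zero_of_forall_specializeA_eq_zero {R : Type*} [CommSemiring R]
    {x : AddMonoidAlgebra R (ℤ × ℤ)}
    (h : ∀ k, specializeA R k x = 0) : x = 0 := by
  obtain ⟨k, hk⟩ := x.coeff.support.exists_injOn_fst_add_mul_snd
  apply AddMonoidAlgebra.coeff_injective
  refine Finsupp.mapDomain_injOn _ hk (by simp) (by simp) ?_
  convert congrArg AddMonoidAlgebra.coeff (h k) using 1
  · simp only [specializeA, AddMonoidAlgebra.mapDomainRingHom_apply]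
    rfl
  · simp

theorem LaurentPolynomial.T_two_sub_one_dvd_T_sub_T_neg {R : Type*} [CommRing R] (m : ℤ) :
    (T 2 - 1 : R[T;T⁻¹]) ∣ T m - T (-m) := by
  have hnat (n : ℕ) : (T 2 - 1 : R[T;T⁻¹]) ∣ T n - T (-n) := by
    have h : (T n - T (-n) : R[T;T⁻¹]) = T (-n) * (T 2 ^ n - 1) := by
      rw [T_pow, mul_sub, ← T_add, mul_one]
      ring_nf
    rw [h]
    exact (sub_one_dvd_pow_sub_one _ n).mul_left _
  obtain ⟨n, rfl | rfl⟩ := Int.eq_nat_or_neg m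
  · exact hnat n
  · rw [neg_neg, dvd_sub_comm]
    exact hnat n

theorem LaurentPolynomial.span_T_two_sub_one_ne_top {R : Type*} [CommRing R] [Nontrivial R] :
    Ideal.span {(T 2 - 1 : R[T;T⁻¹])} ≠ ⊤ := by
  rw [Ne, Ideal.span_singleton_eq_top]
  intro hu
  simpa using hu.map (eval₂ (RingHom.id R) 1)

theorem LaurentPolynomial.iInf_span_T_two_sub_one_pow {R : Type*} [CommRing R] [IsDomain R]
    [IsNoetherianRing R] : ⨅ n : ℕ, Ideal.span {(T 2 - 1 : R[T;T⁻¹])} ^ n = ⊥ :=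
  Ideal.iInf_pow_eq_bot_of_isDomain _ span_T_two_sub_one_ne_top

theorem specializeA_braidFactor (k l : ℤ) (i : ℕ) :
    specializeA ℤ k (Apow 1 * qpow (l - i) - Apow (-1) * qpow (-l + i)) =
      T (l - i + k) - T (-(l - i + k)) := by
  simp only [Apow, qpow, AddMonoidAlgebra.single_mul_single, map_sub, specializeA_single,
    Prod.fst_add, Prod.snd_add]
  congr 2 <;> ring

theorem T_two_sub_one_pow_dvd_specializeA_braidProd (k l : ℤ) (n : ℕ) :
    (T 2 - 1) ^ n ∣ specializeA ℤ k (braidProd l n) := by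
  have hfactor (i : ℕ) : (T 2 - 1 : ℤ[T;T⁻¹]) ∣
      specializeA ℤ k (Apow 1 * qpow (l - i) - Apow (-1) * qpow (-l + i)) := by
    rw [specializeA_braidFactor]
    exact T_two_sub_one_dvd_T_sub_T_neg _
  rw [braidProd, map_prod, Finset.pow_eq_prod_const]
  exact Finset.prod_dvd_prod_of_dvd _ _ fun i _ => hfactor i

theorem map_specializeA_In_le (k : ℤ) (n : ℕ) :
    (In n).map (specializeA ℤ k) ≤ Ideal.span {(T 2 - 1 : ℤ[T;T⁻¹])} ^ n := by
  rw [In, Ideal.map_span, Ideal.span_singleton_pow, Ideal.span_le]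
  rintro _ ⟨_, ⟨l, rfl⟩, rfl⟩
  exact Ideal.mem_span_singleton.2 (T_two_sub_one_pow_dvd_specializeA_braidProd k l n)

/-- `⋂_{n ≥ 1} I_n = {0}` in `ℤ[q^{±1}, A^{±1}]`. -/
theorem stmt_2 : (⨅ n ∈ Set.Ici 1, In n) = ⊥ := by
  refine eq_bot_iff.2 fun x hx => Ideal.mem_bot.2 <|
    eq_zero_of_forall_specializeA_eq_zero fun k => ?_
  rw [← Ideal.mem_bot, ← iInf_span_T_two_sub_one_pow, Ideal.mem_iInf]
  intro n
  rcases Nat.eq_zero_or_pos n with rfl | hn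
  · simp
  · exact map_specializeA_In_le k n <| Ideal.mem_map_of_mem _ <|
      Ideal.mem_iInf.1 (Ideal.mem_iInf.1 hx n) hn
end

section
/- With R = Z[q^{±1}, A^{±1}] and I_n the ideal generated by {α+l; n} for l ∈ Z, the evaluation map f_k : R → Z[q^{±1}] sending A to q^k maps I_n into the ideal {n}!·Z[q^{±1}], where {n}! = ∏_{i=1}^n (q^i − q^{−i}). -/
/-- The additive monoid hom `(ℤ × ℤ) → ℤ`, `(a, b) ↦ a + k b`, inducing `q ↦ q`, `A ↦ q^k`. -/
def expHom (k : ℤ) : ℤ × ℤ →+ ℤ where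
  toFun p := p.1 + k * p.2
  map_zero' := by simp
  map_add' p q := by simp [Prod.fst_add, Prod.snd_add]; ring

/-- The evaluation ring homomorphism `f_k : ℤ[q^{±1}, A^{±1}] → ℤ[q^{±1}]`, `A ↦ q^k`. -/
noncomputable def fk (k : ℤ) : TwoVarLaurent →+* AddMonoidAlgebra ℤ ℤ :=
  AddMonoidAlgebra.mapDomainRingHom ℤ (expHom k)

/-- The quantum factorial `{n}! = ∏_{i=1}^{n} (q^i − q^{−i})` in `ℤ[q^{±1}]`. -/
noncomputable def qfact (n : ℕ) : AddMonoidAlgebra ℤ ℤ :=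
  ∏ i ∈ Finset.range n,
    (AddMonoidAlgebra.single ((i : ℤ) + 1) 1 - AddMonoidAlgebra.single (-(i : ℤ) - 1) 1)

/-!
Write `{m} = q^m - q^{-m}` and `{m; n} = ∏_{i<n} {m - i}` in `ℤ[q^{±1}]`; then
`f_k {α+l; n} = {k+l; n}` and `{n}! = ∏_{i<n} {i+1}`, so it suffices that `{n}! ∣ {m; n}` for every
`m ∈ ℤ`. Splitting `{m+1} = q^{n+1} {m-n} + q^{n-m} {n+1}` gives the `q`-Pascal rule
`{m+1; n+1} = q^{n+1} {m; n+1} + q^{n-m} {n+1} {m; n}`. By induction on `n` the last term is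
divisible by `{n+1}! = {n}! {n+1}`, and `q^{n+1}` is a unit, so whether `{n+1}! ∣ {m; n+1}` does not
depend on `m`; it holds for `m = 0`, where the factor `{0}` vanishes.
-/

section QuantumIntegers

variable {R : Type*} [CommRing R] (q : Rˣ)

def qBracket (m : ℤ) : R := ((q ^ m : Rˣ) : R) - ((q ^ (-m) : Rˣ) : R)

def qFallingProd (m : ℤ) (n : ℕ) : R := ∏ i ∈ Finset.range n, qBracket q (m - i)

def qFactorial (n : ℕ) : R := ∏ i ∈ Finset.range n, qBracket q ((i : ℤ) + 1)

@[simp]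
lemma qBracket_zero : qBracket q 0 = 0 := by
  simp [qBracket]

lemma qBracket_add (x y : ℤ) :
    qBracket q (x + y) = (q ^ y : Rˣ) * qBracket q x + (q ^ (-x) : Rˣ) * qBracket q y := by
  simp only [qBracket, mul_sub, ← Units.val_mul, ← zpow_add]
  ring_nf

lemma qFallingProd_zero_succ (n : ℕ) : qFallingProd q 0 (n + 1) = 0 :=
  Finset.prod_eq_zero (Finset.mem_range.mpr n.succ_pos) (by simp)

lemma qFallingProd_succ (m : ℤ) (n : ℕ) :
    qFallingProd q m (n + 1) = qFallingProd q m n * qBracket q (m - n) :=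
  Finset.prod_range_succ _ n

lemma qFallingProd_succ_succ (m : ℤ) (n : ℕ) :
    qFallingProd q (m + 1) (n + 1) = qBracket q (m + 1) * qFallingProd q m n := by
  simp only [qFallingProd, Finset.prod_range_succ', Nat.cast_add, Nat.cast_one, Nat.cast_zero,
    sub_zero, add_sub_add_right_eq_sub, mul_comm]

lemma qFallingProd_pascal (m : ℤ) (n : ℕ) :
    qFallingProd q (m + 1) (n + 1) =
      (q ^ ((n : ℤ) + 1) : Rˣ) * qFallingProd q m (n + 1) +
        (q ^ ((n : ℤ) - m) : Rˣ) * (qBracket q ((n : ℤ) + 1) * qFallingProd q m n) := by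
  have h := qBracket_add q (m - n) (n + 1)
  rw [show m - n + (n + 1) = m + 1 by ring, neg_sub] at h
  rw [qFallingProd_succ_succ, qFallingProd_succ, h]
  ring

lemma qFactorial_succ (n : ℕ) :
    qFactorial q (n + 1) = qFactorial q n * qBracket q ((n : ℤ) + 1) :=
  Finset.prod_range_succ _ n

theorem qFactorial_dvd_qFallingProd (n : ℕ) (m : ℤ) : qFactorial q n ∣ qFallingProd q m n := by
  induction n generalizing m with
  | zero => simp [qFactorial]
  | succ n ih =>
    have step (m : ℤ) : qFactorial q (n + 1) ∣ qFallingProd q (m + 1) (n + 1) ↔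
        qFactorial q (n + 1) ∣ qFallingProd q m (n + 1) := by
      have hlast : qFactorial q (n + 1) ∣ qBracket q ((n : ℤ) + 1) * qFallingProd q m n := by
        rw [qFactorial_succ, mul_comm]
        exact mul_dvd_mul_left _ (ih m)
      rw [qFallingProd_pascal, dvd_add_left (hlast.mul_left _), Units.dvd_mul_left]
    induction m using Int.induction_on with
    | zero => simp [qFallingProd_zero_succ]
    | succ m hm => exact (step m).2 hm
    | pred m hm => exact (step (-m - 1)).1 (by rwa [sub_add_cancel])

end QuantumIntegers

noncomputable def laurentQ : (AddMonoidAlgebra ℤ ℤ)ˣ :=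
  Units.map (AddMonoidAlgebra.of ℤ ℤ) (toUnits (Multiplicative.ofAdd 1))

lemma laurentQ_zpow (m : ℤ) : ((laurentQ ^ m : (AddMonoidAlgebra ℤ ℤ)ˣ) : AddMonoidAlgebra ℤ ℤ) =
    AddMonoidAlgebra.single m 1 := by
  simp [laurentQ, ← map_zpow]

lemma qfact_eq_qFactorial (n : ℕ) : qfact n = qFactorial laurentQ n := by
  refine Finset.prod_congr rfl fun i _ => ?_
  rw [qBracket, laurentQ_zpow, laurentQ_zpow, neg_add']

lemma fk_single (k : ℤ) (p : ℤ × ℤ) (c : ℤ) :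
    fk k (AddMonoidAlgebra.single p c) = AddMonoidAlgebra.single (p.1 + k * p.2) c := by
  simp [fk, AddMonoidAlgebra.mapDomainRingHom, expHom]

lemma fk_braidProd (k l : ℤ) (n : ℕ) : fk k (braidProd l n) = qFallingProd laurentQ (k + l) n := by
  rw [braidProd, map_prod]
  refine Finset.prod_congr rfl fun i _ => ?_
  simp only [Apow, qpow, AddMonoidAlgebra.single_mul_single, map_sub, fk_single, qBracket,
    laurentQ_zpow]
  congr 2 <;> simp <;> ring

/-- the evaluation `f_k` maps `I_n` into the ideal `{n}! · ℤ[q^{±1}]`. -/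
theorem stmt_3 (k : ℤ) (n : ℕ) (x : TwoVarLaurent) (hx : x ∈ In n) :
    fk k x ∈ Ideal.span {qfact n} := by
  rw [← Ideal.mem_comap]
  refine Ideal.span_le.mpr ?_ hx
  rintro _ ⟨l, rfl⟩
  rw [SetLike.mem_coe, Ideal.mem_comap, Ideal.mem_span_singleton, qfact_eq_qFactorial,
    fk_braidProd]
  exact qFactorial_dvd_qFallingProd laurentQ n (k + l)
end

section
/- For ζ = ζ_{2r} a primitive 2r-th root of unity and nonnegative integers a, i < r and u, l ≥ 0, the quantum binomial coefficient satisfies: binom_q(a+i+r(u+l), i+rl) evaluated at q = ζ equals (−1)^{al + rul + ui} · binom(u+l, l) · binom_ζ(a+i, i), where binom(u+l, l) is the ordinary binomial coefficient. -/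
/-!
At a primitive `2r`-th root of unity `ζ ^ r = -1`, so the quantum integer `{r} = ζ ^ r - ζ ^ (-r)`
vanishes while `{m} ≠ 0` for `0 < m < r`. The absorption identity
`{k} [n, k] = {n - k + 1} [n, k - 1]` then kills `[r, k]_ζ` for `0 < k < r`, and the `q`-Pascal
recursion turns this into the Lucas-type recursion
`[n + r, k]_ζ = (-1)^k [n, k]_ζ + (-1)^(n + r + k) [n, k - r]_ζ`.
Starting from `n = a + i` with `a, i < r`, iterating it `u + l` times behaves, up to signs, exactly
like Pascal's rule for the ordinary binomial coefficient `C(u + l, l)`.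
-/

/-- The balanced quantum binomial coefficient `[n choose k]_q` (with `[m] = (q^m−q^{−m})/(q−q^{−1})`)
evaluated at `q = z ∈ ℂˣ`, defined by the `q`-Pascal recursion
`[n+1 choose k+1] = q^{k+1} [n choose k+1] + q^{k−n} [n choose k]`. -/
noncomputable def qbinomC (z : ℂ) : ℕ → ℕ → ℂ
  | _, 0 => 1
  | 0, _ + 1 => 0
  | n + 1, k + 1 => z ^ (k + 1) * qbinomC z n (k + 1) + z ^ ((k : ℤ) - n) * qbinomC z n k

theorem qbinomC_zero_right (z : ℂ) (n : ℕ) : qbinomC z n 0 = 1 := by cases n <;> rfl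

theorem qbinomC_succ_succ (z : ℂ) (n k : ℕ) :
    qbinomC z (n + 1) (k + 1) =
      z ^ (k + 1) * qbinomC z n (k + 1) + z ^ ((k : ℤ) - n) * qbinomC z n k := rfl

theorem qbinomC_eq_zero_of_lt (z : ℂ) : ∀ {n k : ℕ}, n < k → qbinomC z n k = 0
  | 0, _ + 1, _ => rfl
  | n + 1, k + 1, h => by
    rw [qbinomC_succ_succ, qbinomC_eq_zero_of_lt z (by omega : n < k + 1),
      qbinomC_eq_zero_of_lt z (by omega : n < k)]
    ring

theorem qbinomC_self (z : ℂ) : ∀ n, qbinomC z n n = 1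
  | 0 => rfl
  | n + 1 => by
    simp [qbinomC_succ_succ, qbinomC_eq_zero_of_lt z (Nat.lt_succ_self n), qbinomC_self z n]

/-- The lower index is made an integer so that the recursions below, which lower it by `1` or
by `r`, need no case split at the boundary. -/
noncomputable def qbinomInt (z : ℂ) (n : ℕ) (k : ℤ) : ℂ :=
  if 0 ≤ k then qbinomC z n k.toNat else 0

section qbinomInt

variable (z : ℂ) (n : ℕ)

@[simp]
theorem qbinomInt_natCast (k : ℕ) : qbinomInt z n k = qbinomC z n k := by
  simp [qbinomInt]

theorem qbinomInt_of_neg {k : ℤ} (hk : k < 0) : qbinomInt z n k = 0 := by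
  simp [qbinomInt, hk]

@[simp]
theorem qbinomInt_zero : qbinomInt z n 0 = 1 := by
  simp [qbinomInt, qbinomC_zero_right]

theorem qbinomInt_of_lt {k : ℤ} (hk : (n : ℤ) < k) : qbinomInt z n k = 0 := by
  lift k to ℕ using by omega
  simpa using qbinomC_eq_zero_of_lt z (by omega : n < k)

@[simp]
theorem qbinomInt_self : qbinomInt z n n = 1 := by simp [qbinomC_self]

theorem qbinomInt_zero_left (k : ℤ) : qbinomInt z 0 k = if k = 0 then 1 else 0 := by
  split_ifs with hk
  · simp [hk]
  · rcases lt_or_gt_of_ne hk with hk | hk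
    · exact qbinomInt_of_neg z 0 hk
    · exact qbinomInt_of_lt z 0 hk

theorem qbinomInt_succ (k : ℤ) :
    qbinomInt z (n + 1) k =
      z ^ k * qbinomInt z n k + z ^ (k - 1 - n) * qbinomInt z n (k - 1) := by
  rcases k with (_ | k) | k
  · simp [qbinomInt_of_neg]
  · rw [Int.ofNat_eq_natCast, show ((k + 1 : ℕ) : ℤ) - 1 - n = k - n by omega,
      show ((k + 1 : ℕ) : ℤ) - 1 = k by omega]
    simp only [qbinomInt_natCast, qbinomC_succ_succ, zpow_natCast]
  · simp [qbinomInt_of_neg, Int.negSucc_lt_zero]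

end qbinomInt

theorem qbinomInt_absorb {z : ℂ} (hz : z ≠ 0) : ∀ (n : ℕ) (j : ℤ),
    (z ^ j - z ^ (-j)) * qbinomInt z n j =
      (z ^ ((n : ℤ) - j + 1) - z ^ (j - 1 - n)) * qbinomInt z n (j - 1)
  | 0, j => by
    simp only [qbinomInt_zero_left]
    split_ifs with hj hj'
    · omega
    · simp [hj]
    · obtain rfl : j = 1 := by omega
      simp
    · simp
  | n + 1, j => by
    have ih := qbinomInt_absorb hz n j
    have ih' := qbinomInt_absorb hz n (j - 1)
    have key : z ^ j * (z ^ ((n : ℤ) - j + 1) - z ^ (j - 1 - n)) +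
          (z ^ j - z ^ (-j)) * z ^ (j - 1 - n)
        = (z ^ ((n : ℤ) - (j - 1) + 1) - z ^ (j - 1 - 1 - n)) * z ^ (j - 1)
          + z ^ (j - 1 - 1 - n) * (z ^ (j - 1) - z ^ (-(j - 1))) := by
      simp only [mul_sub, sub_mul, ← zpow_add₀ hz]
      ring_nf
    rw [qbinomInt_succ, qbinomInt_succ, Nat.cast_succ,
      show (n : ℤ) + 1 - j + 1 = n - (j - 1) + 1 by ring,
      show j - 1 - (n + 1 : ℤ) = j - 1 - 1 - n by ring]
    linear_combination z ^ j * ih + z ^ (j - 1 - 1 - n) * ih' + qbinomInt z n (j - 1) * key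

theorem neg_one_zpow_mul_neg_one_zpow {K : Type*} [DivisionRing K] {e f g : ℤ}
    (h : Even (e + f - g)) : (-1 : K) ^ e * (-1) ^ f = (-1) ^ g := by
  rw [← zpow_add₀ (by norm_num), ← sub_add_cancel (e + f) g, zpow_add₀ (by norm_num),
    h.neg_one_zpow, one_mul]

section PrimitiveRoot

variable {K : Type*} [Field K] {r : ℕ} {ζ : K}

theorem IsPrimitiveRoot.pow_eq_neg_one (hr : 0 < r) (hζ : IsPrimitiveRoot ζ (2 * r)) :
    ζ ^ r = -1 :=
  (hζ.pow (by omega) (mul_comm 2 r)).eq_neg_one_of_two_right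

theorem IsPrimitiveRoot.zpow_sub_eq_neg (hr : 0 < r) (hζ : IsPrimitiveRoot ζ (2 * r)) (e : ℤ) :
    ζ ^ (e - r) = -ζ ^ e := by
  rw [zpow_sub₀ (hζ.ne_zero (by omega)), zpow_natCast, hζ.pow_eq_neg_one hr, div_neg, div_one]

theorem IsPrimitiveRoot.zpow_ne_zpow_neg (hζ : IsPrimitiveRoot ζ (2 * r)) {m : ℕ} (hm : 0 < m)
    (hmr : m < r) : ζ ^ (m : ℤ) ≠ ζ ^ (-(m : ℤ)) := by
  intro h
  have hz : ζ ≠ 0 := hζ.ne_zero (by omega)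
  have hsq : ζ ^ (m : ℤ) * ζ ^ (m : ℤ) = 1 := by
    nth_rw 1 [h]
    rw [← zpow_add₀ hz, neg_add_cancel, zpow_zero]
  refine hζ.pow_ne_one_of_pos_of_lt (l := 2 * m) (by omega) (by omega) ?_
  rwa [two_mul, pow_add, ← zpow_natCast]

end PrimitiveRoot

section Lucas

variable {r : ℕ} {ζ : ℂ}

theorem qbinomInt_primitiveRoot_eq_zero (hr : 0 < r) (hζ : IsPrimitiveRoot ζ (2 * r)) {m : ℕ}
    (hm : 0 < m) (hmr : m < r) :
    qbinomInt ζ r m = 0 := by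
  induction m with
  | zero => omega
  | succ m ih =>
    have habs := qbinomInt_absorb (hζ.ne_zero (by omega)) r (m + 1)
    have hprev : (ζ ^ ((r : ℤ) - (m + 1) + 1) - ζ ^ ((m : ℤ) - r)) * qbinomInt ζ r m = 0 := by
      rcases Nat.eq_zero_or_pos m with rfl | hm'
      · have hpow : ζ ^ (r : ℤ) = -1 := by rw [zpow_natCast, hζ.pow_eq_neg_one hr]
        simp [zpow_neg, hpow]
      · rw [ih hm' (by omega), mul_zero]
    rw [add_sub_cancel_right, hprev] at habs
    push_cast
    exact (mul_eq_zero.mp habs).resolve_left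
      (sub_ne_zero.mpr (by exact_mod_cast hζ.zpow_ne_zpow_neg (m.succ_pos) hmr))

theorem qbinomInt_add_of_primitiveRoot (hr : 0 < r) (hζ : IsPrimitiveRoot ζ (2 * r)) (n : ℕ)
    (k : ℤ) :
    qbinomInt ζ (n + r) k =
      (-1) ^ k * qbinomInt ζ n k + (-1) ^ (n + r + k) * qbinomInt ζ n (k - r) := by
  induction n generalizing k with
  | zero =>
    simp only [zero_add, qbinomInt_zero_left, Nat.cast_zero]
    rcases lt_trichotomy k 0 with hk | rfl | hk
    · rw [qbinomInt_of_neg _ _ hk, if_neg hk.ne, if_neg (by omega)]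
      simp
    · rw [if_pos rfl, if_neg (by omega), qbinomInt_zero]
      simp
    rcases lt_trichotomy k r with hkr | rfl | hkr
    · lift k to ℕ using hk.le
      rw [qbinomInt_primitiveRoot_eq_zero hr hζ (by omega) (by omega), if_neg (by omega),
        if_neg (by omega)]
      simp
    · rw [qbinomInt_self, if_neg (by omega), if_pos (sub_self _),
        Even.neg_one_zpow ⟨r, rfl⟩]
      simp
    · rw [qbinomInt_of_lt _ _ hkr, if_neg (by omega), if_neg (by omega)]
      simp
  | succ n ih =>
    rw [add_right_comm, qbinomInt_succ, ih, ih, qbinomInt_succ, qbinomInt_succ, Nat.cast_add,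
      show k - 1 - ((n : ℤ) + r) = k - 1 - n - r by ring, show k - 1 - (r : ℤ) = k - r - 1 by ring,
      show k - r - 1 - (n : ℤ) = k - 1 - n - r by ring, hζ.zpow_sub_eq_neg hr,
      hζ.zpow_sub_eq_neg hr]
    have hsub (e : ℤ) : (-1 : ℂ) ^ (e - 1) = -(-1) ^ e := by simp [zpow_sub_one₀]
    have hadd (e : ℤ) : (-1 : ℂ) ^ (e + 1) = -(-1) ^ e := by simp [zpow_add_one₀]
    rw [hsub, show (n : ℤ) + r + (k - 1) = n + r + k - 1 by ring, hsub, Nat.cast_succ,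
      show (n : ℤ) + 1 + r + k = n + r + k + 1 by ring, hadd]
    ring

/-- Stated for every `j`: for `j > m` both sides vanish, so Pascal's rule for `m.choose j` matches
the recursion `qbinomInt_add_of_primitiveRoot` without a case split. -/
theorem qbinomInt_lucas (hr : 0 < r) (hζ : IsPrimitiveRoot ζ (2 * r)) {a i : ℕ} (ha : a < r)
    (hi : i < r) (m j : ℕ) :
    qbinomInt ζ (a + i + r * m) (i + r * j) =
      (-1) ^ (a * j + r * ((m : ℤ) - j) * j + ((m : ℤ) - j) * i) * m.choose j *
        qbinomInt ζ (a + i) i := by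
  induction m generalizing j with
  | zero =>
    cases j with
    | zero => simp
    | succ j =>
      rw [qbinomInt_of_lt _ _ (by push_cast; nlinarith), Nat.choose_zero_succ]
      simp
  | succ m ih =>
    rw [show a + i + r * (m + 1) = a + i + r * m + r by ring, qbinomInt_add_of_primitiveRoot hr hζ]
    cases j with
    | zero =>
      have hsign := neg_one_zpow_mul_neg_one_zpow (K := ℂ) (e := i) (f := m * i) (g := (m + 1) * i)
        ⟨0, by ring⟩
      specialize ih 0
      simp only [Nat.choose_zero_right, Nat.cast_zero, Nat.cast_one, mul_zero, add_zero,
        zero_add, sub_zero, mul_one] at ih ⊢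
      rw [ih, qbinomInt_of_neg _ _ (by omega : (i : ℤ) - r < 0)]
      push_cast
      linear_combination qbinomInt ζ (a + i) i * hsign
    | succ j =>
      have hsign₁ := neg_one_zpow_mul_neg_one_zpow (K := ℂ) (e := i + r * (j + 1))
        (f := a * (j + 1) + r * (m - (j + 1)) * (j + 1) + (m - (j + 1)) * i)
        (g := a * (j + 1) + r * (m + 1 - (j + 1)) * (j + 1) + (m + 1 - (j + 1)) * i) ⟨0, by ring⟩
      have hsign₂ := neg_one_zpow_mul_neg_one_zpow (K := ℂ)
        (e := a + i + r * m + r + (i + r * (j + 1)))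
        (f := a * j + r * (m - j) * j + (m - j) * i)
        (g := a * (j + 1) + r * (m + 1 - (j + 1)) * (j + 1) + (m + 1 - (j + 1)) * i)
        ⟨i + r + r * j, by ring⟩
      rw [show (i : ℤ) + r * (j + 1 : ℕ) - r = i + r * j by push_cast; ring, ih, ih,
        Nat.choose_succ_succ']
      push_cast at hsign₁ hsign₂ ⊢
      linear_combination (m.choose (j + 1) * qbinomInt ζ (a + i) i) * hsign₁ +
        (m.choose j * qbinomInt ζ (a + i) i) * hsign₂

end Lucas

/-- for `ζ` a primitive `2r`-th root of unity, `a, i < r` and `u, l ≥ 0`,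
`[a+i+r(u+l) choose i+rl]_ζ = (−1)^{al+rul+ui} · C(u+l, l) · [a+i choose i]_ζ`. -/
theorem stmt_8 (r : ℕ) (hr : 1 ≤ r) (ζ : ℂ) (hζ : IsPrimitiveRoot ζ (2 * r))
    (a i u l : ℕ) (ha : a < r) (hi : i < r) :
    qbinomC ζ (a + i + r * (u + l)) (i + r * l) =
      (-1 : ℂ) ^ (a * l + r * u * l + u * i) * ((u + l).choose l : ℂ) * qbinomC ζ (a + i) i := by
  have hexp : ((a * l + r * u * l + u * i : ℕ) : ℤ) =
      a * l + r * (((u + l : ℕ) : ℤ) - l) * l + (((u + l : ℕ) : ℤ) - l) * i := by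
    push_cast
    ring
  rw [← qbinomInt_natCast, ← qbinomInt_natCast, ← zpow_natCast, hexp, Nat.cast_add, Nat.cast_mul]
  exact qbinomInt_lucas hr hζ ha hi (u + l) l
end

section
/- In the (A − A^{−1})-adic completion of Z[A^{±1}], the double series Σ_{i,j≥0} A^{j−i} (−1)^i binom(i+j, j) {α}^{i+j}, with {α} = A − A^{−1}, converges and equals 1/(1 − {α}^2); equivalently (1 − (A − A^{−1})^2) · Σ_{i,j≥0} A^{j−i}(−1)^i binom(i+j,j)(A − A^{−1})^{i+j} = 1. -/
open LaurentPolynomial Finset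

private lemma alpha_pow (N : ℕ) :
    ((T 1 : LaurentPolynomial ℤ) - T (-1)) ^ N
      = ∑ k ∈ range (N + 1),
          T ((N : ℤ) - 2 * k) * (-1 : LaurentPolynomial ℤ) ^ k * (N.choose k : LaurentPolynomial ℤ) := by
  rw [sub_eq_add_neg, add_pow, ← Finset.sum_range_reflect]
  refine Finset.sum_congr rfl fun k hk => ?_
  have hk' : k ≤ N := Nat.lt_succ_iff.mp (mem_range.mp hk)
  rw [neg_pow, T_pow, T_pow, mul_one]
  have h1 : N + 1 - 1 - k = N - k := by omega
  have h2 : N - (N - k) = k := by omega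
  rw [h1, h2, Nat.choose_symm hk']
  have h3 : ((N : ℤ) - 2 * k) = (↑(N - k)) + (↑k * (-1)) := by push_cast [hk']; ring
  rw [h3, T_add]
  ring

private lemma rect_sum (n : ℕ) :
    ((T 1 : LaurentPolynomial ℤ) - T (-1)) ^ n ∣
      (∑ i ∈ range n, ∑ j ∈ range n,
          T ((j : ℤ) - (i : ℤ)) * (-1 : LaurentPolynomial ℤ) ^ i *
            ((i + j).choose j : LaurentPolynomial ℤ) * (T 1 - T (-1)) ^ (i + j))
        - ∑ N ∈ range n, (((T 1 : LaurentPolynomial ℤ) - T (-1)) ^ 2) ^ N := by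
  set α : LaurentPolynomial ℤ := T 1 - T (-1) with hα
  set f : ℕ × ℕ → LaurentPolynomial ℤ := fun p =>
    T ((p.2 : ℤ) - (p.1 : ℤ)) * (-1 : LaurentPolynomial ℤ) ^ p.1 *
      ((p.1 + p.2).choose p.2 : LaurentPolynomial ℤ) * α ^ (p.1 + p.2) with hf
  have hsum : (∑ i ∈ range n, ∑ j ∈ range n,
      T ((j : ℤ) - (i : ℤ)) * (-1 : LaurentPolynomial ℤ) ^ i *
        ((i + j).choose j : LaurentPolynomial ℤ) * α ^ (i + j))
      = ∑ p ∈ range n ×ˢ range n, f p := by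
    rw [Finset.sum_product]
  rw [hsum, ← Finset.sum_filter_add_sum_filter_not (range n ×ˢ range n)
      (fun p => p.1 + p.2 < n) f]
  have hlow : (∑ p ∈ (range n ×ˢ range n).filter (fun p => p.1 + p.2 < n), f p)
      = ∑ N ∈ range n, (α ^ 2) ^ N := by
    rw [show (∑ N ∈ range n, (α ^ 2) ^ N)
        = ∑ N ∈ range n, ∑ k ∈ range (N + 1), f (k, N - k) from ?_]
    · rw [Finset.sum_sigma']
      refine Finset.sum_bij' (fun p _ => (⟨p.1 + p.2, p.1⟩ : Σ _ : ℕ, ℕ))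
        (fun x _ => (x.2, x.1 - x.2)) ?_ ?_ ?_ ?_ ?_
      · intro p hp
        simp only [Finset.mem_filter, Finset.mem_product, mem_range] at hp
        simp only [Finset.mem_sigma, mem_range]
        omega
      · intro x hx
        simp only [Finset.mem_sigma, mem_range] at hx
        simp only [Finset.mem_filter, Finset.mem_product, mem_range]
        omega
      · intro p hp
        simp only [Nat.add_sub_cancel_left]
      · intro x hx
        simp only [Finset.mem_sigma, mem_range] at hx
        ext <;> simp <;> omega
      · intro p hp
        simp only [Nat.add_sub_cancel_left]
    · refine Finset.sum_congr rfl fun N hN => ?_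
      have : (∑ k ∈ range (N + 1), f (k, N - k))
          = (∑ k ∈ range (N + 1),
              T ((N : ℤ) - 2 * k) * (-1 : LaurentPolynomial ℤ) ^ k *
                (N.choose k : LaurentPolynomial ℤ)) * α ^ N := by
        rw [Finset.sum_mul]
        refine Finset.sum_congr rfl fun k hk => ?_
        have hk' : k ≤ N := Nat.lt_succ_iff.mp (mem_range.mp hk)
        have h1 : k + (N - k) = N := by omega
        have h2 : ((N - k : ℕ) : ℤ) - (k : ℤ) = (N : ℤ) - 2 * k := by push_cast [hk']; ring
        simp only [hf, h1, h2, Nat.choose_symm hk']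
      rw [this, ← alpha_pow, ← pow_add, ← two_mul, pow_mul]
  rw [hlow, add_sub_cancel_left]
  refine Finset.dvd_sum fun p hp => ?_
  simp only [Finset.mem_filter, Finset.mem_product, mem_range, not_lt] at hp
  exact Dvd.dvd.mul_left (pow_dvd_pow α hp.2) _

/-- in the `(A − A^{−1})`-adic completion of `ℤ[A^{±1}]`, the double series
`Σ_{i,j≥0} A^{j−i} (−1)^i C(i+j, j) (A − A^{−1})^{i+j}` converges and equals
`1/(1 − (A − A^{−1})²)`; i.e. `(1 − (A − A^{−1})²)` times the series equals `1`.
Equality in the completion is expressed as: for every `n`, the partial sums (over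
`i, j < n`, which include all terms of adic order `< n`) satisfy the identity modulo
`(A − A^{−1})^n`. -/
theorem stmt_16 (n : ℕ) :
    (1 - ((T 1 : LaurentPolynomial ℤ) - T (-1)) ^ 2) *
        (∑ i ∈ Finset.range n, ∑ j ∈ Finset.range n,
          T ((j : ℤ) - (i : ℤ)) * (-1 : LaurentPolynomial ℤ) ^ i *
            ((i + j).choose j : LaurentPolynomial ℤ) * (T 1 - T (-1)) ^ (i + j)) - 1 ∈
      (Ideal.span {(T 1 - T (-1) : LaurentPolynomial ℤ)}) ^ n := by
  rw [Ideal.span_singleton_pow, Ideal.mem_span_singleton]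
  set α : LaurentPolynomial ℤ := T 1 - T (-1) with hα
  set S := (∑ i ∈ Finset.range n, ∑ j ∈ Finset.range n,
          T ((j : ℤ) - (i : ℤ)) * (-1 : LaurentPolynomial ℤ) ^ i *
            ((i + j).choose j : LaurentPolynomial ℤ) * α ^ (i + j)) with hS
  set G := ∑ N ∈ Finset.range n, (α ^ 2) ^ N with hG
  have key : (1 - α ^ 2) * S - 1
      = (1 - α ^ 2) * (S - G) - (α ^ 2) ^ n := by
    have h : (α ^ 2 - 1) * G = (α ^ 2) ^ n - 1 := mul_geom_sum (α ^ 2) n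
    clear_value S G
    linear_combination -h
  rw [key]
  have h1 : α ^ n ∣ (1 - α ^ 2) * (S - G) := Dvd.dvd.mul_left (rect_sum n) _
  have h2 : α ^ n ∣ (α ^ 2) ^ n := by
    rw [← pow_mul]
    exact pow_dvd_pow α (by omega)
  exact dvd_sub h1 h2
end

section
/- Let ζ = ζ_{2r} be a primitive 2r-th root of unity and consider the evaluation homomorphism ev : Z[q^{±1}, A^{±1}] → Z[ζ, A^{±1}], q ↦ ζ. Then ev maps the ideal I_{rn} (generated by {α+l; rn} for l ∈ Z) onto the ideal I^n = ({rα}^n), where {rα} = A^r − A^{−r}. Consequently ev induces a well-defined ring homomorphism between the completions lim_← R/I_{rn} → lim_← R_r/I^n. -/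
/-!
At `q = ζ` the `i`-th factor of `{α+l; rn}` is `x - x⁻¹` for the unit `x = A ζ^(l-i)`, and
`x - x⁻¹ = x⁻¹ (x² - 1)` is, up to a unit, `A² ζ^(2l) - ω^i` with `ω = ζ²` a primitive `r`-th root
of unity. As `∏_{i<r} (y - ω^i) = y^r - 1` and `ω^i` is `r`-periodic in `i`, the whole product is,
up to a unit, `(A^(2r) - 1)^n = A^(rn) (A^r - A^(-r))^n`: every generator of `ev(I_{rn})` is
associated to `{rα}^n`.
-/

open Finset LaurentPolynomial

theorem AddMonoidAlgebra.map_single_zsmul {k G S : Type*} [Semiring k] [AddGroup G] [Semiring S]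
    (f : AddMonoidAlgebra k G →+* S) {g : G} {u : Sˣ} (hu : f (single g 1) = u) (m : ℤ) :
    f (single (m • g) 1) = ↑(u ^ m) := by
  let φ := (f.toMonoidHom.comp (of k G)).toHomUnits
  have hφ : φ (.ofAdd g) = u := Units.ext hu
  calc f (single (m • g) 1) = φ (.ofAdd (m • g)) := rfl
    _ = ↑(u ^ m) := by rw [ofAdd_zsmul, map_zpow, hφ]

theorem LaurentPolynomial.val_isUnit_T_one_unit_zpow {S : Type*} [Semiring S] (m : ℤ) :
    ((isUnit_T 1).unit ^ m : S[T;T⁻¹]ˣ) = (T m : S[T;T⁻¹]) := by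
  have h := AddMonoidAlgebra.map_single_zsmul (RingHom.id S[T;T⁻¹]) (isUnit_T 1).unit_spec.symm m
  rw [smul_eq_mul, mul_one] at h
  exact h.symm

theorem Units.val_mul_inv_sub_val_inv {R : Type*} [CommRing R] (b c : Rˣ) :
    ((b * c⁻¹ : Rˣ) : R) - ↑(b * c⁻¹)⁻¹ = ↑(b * c)⁻¹ * ((b : R) ^ 2 - (c : R) ^ 2) := by
  rw [_root_.mul_inv, _root_.mul_inv, inv_inv]
  simp only [Units.val_mul]
  linear_combination (↑b⁻¹ * ↑c : R) * c.mul_inv - (↑b * ↑c⁻¹ : R) * b.mul_inv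

section PrimitiveRoot

variable {R : Type*} [CommRing R] [IsDomain R] {ω : R} {r : ℕ}

theorem IsPrimitiveRoot.prod_range_sub_pow (hω : IsPrimitiveRoot ω r) (hr : 0 < r) (y : R) :
    ∏ i ∈ range r, (y - ω ^ i) = y ^ r - 1 := by
  simpa [Polynomial.eval_prod] using
    (congrArg (Polynomial.eval y) (X_pow_sub_C_eq_prod hω hr (one_pow r))).symm

theorem IsPrimitiveRoot.prod_range_mul_sub_pow (hω : IsPrimitiveRoot ω r) (hr : 0 < r) (y : R)
    (n : ℕ) : ∏ i ∈ range (r * n), (y - ω ^ i) = (y ^ r - 1) ^ n := by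
  induction n with
  | zero => simp
  | succ n ih =>
    rw [Nat.mul_succ, prod_range_add, ih, pow_succ]
    simp only [pow_add, pow_mul, hω.pow_eq_one, one_pow, one_mul]
    rw [hω.prod_range_sub_pow hr]

theorem IsPrimitiveRoot.associated_prod_range_sub_inv {ζ : Rˣ}
    (hζ : IsPrimitiveRoot (ζ : R) (2 * r)) (hr : 0 < r) (a : Rˣ) (l : ℤ) (n : ℕ) :
    Associated (∏ i ∈ range (r * n), (((a * ζ ^ (l - i) : Rˣ) : R) - ↑(a * ζ ^ (l - i))⁻¹))
      ((((a ^ (r : ℤ) : Rˣ) : R) - ↑(a ^ (-(r : ℤ)))) ^ n) := by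
  set b := a * ζ ^ l
  have hω : IsPrimitiveRoot ((ζ : R) ^ 2) r := hζ.pow (by omega) rfl
  have hfactor (i : ℕ) : ((a * ζ ^ (l - i) : Rˣ) : R) - ↑(a * ζ ^ (l - i))⁻¹ =
      ↑(b * ζ ^ i)⁻¹ * ((b : R) ^ 2 - ((ζ : R) ^ 2) ^ i) := by
    rw [zpow_sub, zpow_natCast, ← mul_assoc, Units.val_mul_inv_sub_val_inv,
      Units.val_pow_eq_pow_val, ← pow_mul, ← pow_mul, mul_comm i]
  have hζr : ζ ^ (2 * r) = 1 := Units.ext (by simpa using hζ.pow_eq_one)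
  have hblock : ((b : R) ^ 2) ^ r - 1 = ↑(a ^ (r : ℤ)) * (↑(a ^ (r : ℤ)) - ↑(a ^ (-(r : ℤ)))) := by
    have hb : (b ^ 2) ^ r = a ^ (2 * r) := by
      rw [← pow_mul, mul_pow, ← zpow_natCast (ζ ^ l), ← zpow_mul, mul_comm l, zpow_mul,
        zpow_natCast, hζr, one_zpow, mul_one]
    have hsq : ((b : R) ^ 2) ^ r = ((a ^ (r : ℤ) : Rˣ) : R) ^ 2 := by
      rw [← Units.val_pow_eq_pow_val, ← Units.val_pow_eq_pow_val, ← Units.val_pow_eq_pow_val,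
        hb, pow_mul', zpow_natCast]
    have hinv : ((a ^ (r : ℤ) : Rˣ) : R) * ↑(a ^ (-(r : ℤ))) = 1 := by
      rw [← Units.val_mul, ← zpow_add, add_neg_cancel, zpow_zero, Units.val_one]
    linear_combination hsq + hinv
  rw [prod_congr rfl fun i _ => hfactor i, prod_mul_distrib, hω.prod_range_mul_sub_pow hr, hblock,
    mul_pow, ← Units.coe_prod, ← Units.val_pow_eq_pow_val, ← mul_assoc, ← Units.val_mul]
  exact associated_unit_mul_left _ _ (Units.isUnit _)

end PrimitiveRoot

theorem Ideal.span_eq_span_singleton_of_forall_associated {R : Type*} [CommSemiring R] {s : Set R}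
    {x : R} (hs : s.Nonempty) (h : ∀ y ∈ s, Associated y x) : Ideal.span s = Ideal.span {x} := by
  obtain ⟨y, hy⟩ := hs
  refine le_antisymm (Ideal.span_le.2 fun z hz => Ideal.mem_span_singleton.2 (h z hz).symm.dvd) ?_
  exact (Ideal.span_singleton_le_iff_mem _).2 <|
    Ideal.mem_of_dvd _ (h y hy).dvd (Ideal.subset_span hy)

section Evaluation

variable {S : Type*} [CommRing S] (ev : TwoVarLaurent →+* S)

theorem map_qpow {u : Sˣ} (hu : ev (qpow 1) = u) (m : ℤ) : ev (qpow m) = ↑(u ^ m) := by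
  simpa [qpow] using AddMonoidAlgebra.map_single_zsmul ev hu m

theorem map_Apow {u : Sˣ} (hu : ev (Apow 1) = u) (m : ℤ) : ev (Apow m) = ↑(u ^ m) := by
  simpa [Apow] using AddMonoidAlgebra.map_single_zsmul ev hu m

theorem map_braidProd {z a : Sˣ} (hq : ev (qpow 1) = z) (hA : ev (Apow 1) = a) (l : ℤ) (n : ℕ) :
    ev (braidProd l n) = ∏ i ∈ range n, (((a * z ^ (l - i) : Sˣ) : S) - ↑(a * z ^ (l - i))⁻¹) := by
  rw [braidProd, map_prod]
  refine prod_congr rfl fun i _ => ?_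
  rw [map_sub, map_mul, map_mul, map_qpow ev hq, map_qpow ev hq, map_Apow ev hA, map_Apow ev hA,
    ← Units.val_mul, ← Units.val_mul]
  congr 2
  · rw [zpow_one]
  · rw [mul_inv, ← zpow_neg_one a, ← zpow_neg, neg_sub, sub_eq_neg_add]

end Evaluation

theorem map_In_mul_eq_span_pow {S : Type*} [CommRing S] [IsDomain S] {r : ℕ} (hr : 0 < r) (n : ℕ)
    {z : S} (hz : IsPrimitiveRoot z (2 * r)) (ev : TwoVarLaurent →+* S[T;T⁻¹])
    (hq : ev (qpow 1) = C z) (hA : ev (Apow 1) = T 1) :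
    Ideal.map ev (In (r * n)) = Ideal.span {(T r - T (-r) : S[T;T⁻¹])} ^ n := by
  set zL : S[T;T⁻¹]ˣ := ((hz.isUnit (by omega)).map C).unit
  set aL : S[T;T⁻¹]ˣ := (isUnit_T 1).unit
  have hzL : ev (qpow 1) = zL := by simp [zL, hq]
  have haL : ev (Apow 1) = aL := hA.trans (isUnit_T 1).unit_spec.symm
  have hzL_prim : IsPrimitiveRoot (zL : S[T;T⁻¹]) (2 * r) := by
    simpa [zL] using hz.map_of_injective (f := C) fun _ _ h => AddMonoidAlgebra.single_right_inj.1 h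
  rw [In, Ideal.map_span, Ideal.span_singleton_pow]
  refine Ideal.span_eq_span_singleton_of_forall_associated ⟨_, braidProd 0 _, ⟨0, rfl⟩, rfl⟩ ?_
  rintro _ ⟨_, ⟨l, rfl⟩, rfl⟩
  have hT (m : ℤ) : (T m : S[T;T⁻¹]) = ↑(aL ^ m) := (val_isUnit_T_one_unit_zpow m).symm
  rw [map_braidProd ev hzL haL, hT, hT]
  exact hzL_prim.associated_prod_range_sub_inv hr aL l n

/-- let `ζ` be a primitive `2r`-th root of unity, and let
`ev : ℤ[q^{±1}, A^{±1}] → ℤ[ζ][A^{±1}]` be the evaluation homomorphism with `q ↦ ζ`,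
`A ↦ A` (codomain: Laurent polynomials over the subring `ℤ[ζ] ⊆ ℂ`). Then `ev` maps the
ideal `I_{rn}` onto the ideal `I^n = ({rα}^n)` with `{rα} = A^r − A^{−r}`. (This is the
statement making the induced map between the completions well defined.) -/
theorem stmt_18 (r n : ℕ) (hr : 1 ≤ r) (ζ : ℂ) (hζ : IsPrimitiveRoot ζ (2 * r))
    (ev : TwoVarLaurent →+* LaurentPolynomial (Algebra.adjoin ℤ ({ζ} : Set ℂ)))
    (hq : ev (qpow 1) =
      LaurentPolynomial.C ⟨ζ, Algebra.subset_adjoin (Set.mem_singleton ζ)⟩)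
    (hA : ev (Apow 1) = LaurentPolynomial.T 1) :
    Ideal.map ev (In (r * n)) =
      (Ideal.span {(LaurentPolynomial.T (r : ℤ) - LaurentPolynomial.T (-(r : ℤ)) :
        LaurentPolynomial (Algebra.adjoin ℤ ({ζ} : Set ℂ)))}) ^ n := by
  refine map_In_mul_eq_span_pow hr n ?_ ev hq hA
  exact IsPrimitiveRoot.of_map_of_injective (f := (Algebra.adjoin ℤ ({ζ} : Set ℂ)).val) hζ
    Subtype.coe_injective
end
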